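/- Let p ∈ (0,1), n ≥ 1, x ∈ ℤⁿ, and let x̃_i = x_i + η_i where η_1,…,η_n are i.i.d. discrete Laplace with parameter p. Define coefficients α_0 = 1 + 2p/(1-p)² and α_{±1} = -p/(1-p)². For f : ℤⁿ → ℝ with E[|f(x̃)|] finite, the estimator g(y) = Σ_{ξ ∈ {-1,0,1}ⁿ} f(y + ξ)·Π_{j=1}^n α_{ξ_j} satisfies E[g(x̃)] = f(x). -/

import Mathlib

/-!
With `P` the discrete Laplace mass, the one-dimensional identity
`∑_{t ∈ {-1,0,1}} α_t P(m - t) = δ_{m,0}` says that the stencil `α` inverts convolution by `P`;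
for `m ≠ 0` it reduces to `p (p^{|m|+1} + p^{|m|-1}) = (p² + 1) p^{|m|}`. Over `ℤⁿ` the stencil
and the mass are both products over coordinates, so the identity tensorizes. Shifting the
summation variable by `ξ` turns `E[g(x̃)]` into `∑_η f(x + η) ∑_ξ α_ξ P(η - ξ) = f(x)`; the shifts
are legitimate because `p P(m) ≤ P(m ± 1)`, so every shifted series is dominated by `p⁻ⁿ` times
the assumed summable one.
-/

open Finset

noncomputable def discreteLaplaceMass (p : ℝ) (m : ℤ) : ℝ := (1 - p) / (1 + p) * p ^ |m|

noncomputable def debiasCoeff (p : ℝ) (t : ℤ) : ℝ :=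
  if t = 0 then 1 + 2 * p / (1 - p) ^ 2 else -p / (1 - p) ^ 2

lemma mul_zpow_abs_add_one_add_zpow_abs_sub_one {p : ℝ} (hp : p ≠ 0) {m : ℤ} (hm : m ≠ 0) :
    p * (p ^ |m + 1| + p ^ |m - 1|) = (p ^ 2 + 1) * p ^ |m| := by
  rcases hm.lt_or_gt with hm | hm
  · rw [abs_of_nonpos (by omega : m + 1 ≤ 0), abs_of_neg (by omega : m - 1 < 0), abs_of_neg hm,
      neg_add', neg_sub', sub_neg_eq_add, zpow_sub₀ hp, zpow_add₀ hp, zpow_one]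
    field_simp
    ring
  · rw [abs_of_pos (by omega : 0 < m + 1), abs_of_nonneg (by omega : 0 ≤ m - 1), abs_of_pos hm,
      zpow_sub₀ hp, zpow_add₀ hp, zpow_one]
    field_simp

theorem sum_debiasCoeff_mul_discreteLaplaceMass {p : ℝ} (hp0 : 0 < p) (hp1 : p < 1) (m : ℤ) :
    ∑ t ∈ ({-1, 0, 1} : Finset ℤ), debiasCoeff p t * discreteLaplaceMass p (m - t) =
      if m = 0 then 1 else 0 := by
  have hp_sub : 1 - p ≠ 0 := by linarith
  have hp_add : 1 + p ≠ 0 := by linarith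
  rw [sum_insert (by decide), sum_insert (by decide), sum_singleton]
  simp only [debiasCoeff, discreteLaplaceMass, neg_eq_zero, one_ne_zero, ↓reduceIte,
    sub_neg_eq_add, sub_zero]
  split_ifs with hm
  · subst hm
    norm_num
    field_simp
    ring
  · field_simp
    linear_combination -mul_zpow_abs_add_one_add_zpow_abs_sub_one hp0.ne' hm

lemma discreteLaplaceMass_nonneg {p : ℝ} (hp0 : 0 < p) (hp1 : p ≤ 1) (m : ℤ) :
    0 ≤ discreteLaplaceMass p m :=
  mul_nonneg (div_nonneg (by linarith) (by linarith)) (zpow_nonneg hp0.le _)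

lemma mul_discreteLaplaceMass_le {p : ℝ} (hp0 : 0 < p) (hp1 : p ≤ 1) (m : ℤ) {t : ℤ}
    (ht : |t| ≤ 1) : p * discreteLaplaceMass p m ≤ discreteLaplaceMass p (m + t) := by
  have hc : 0 ≤ (1 - p) / (1 + p) := div_nonneg (by linarith) (by linarith)
  have habs : |m + t| ≤ |m| + 1 := (abs_add_le m t).trans (by linarith)
  calc p * discreteLaplaceMass p m = (1 - p) / (1 + p) * p ^ (|m| + 1) := by
        rw [discreteLaplaceMass, zpow_add_one₀ hp0.ne']; ring
    _ ≤ discreteLaplaceMass p (m + t) :=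
        mul_le_mul_of_nonneg_left (zpow_le_zpow_right_of_le_one₀ hp0 hp1 habs) hc

section Multivariate

variable {ι : Type*} [Fintype ι] {p : ℝ}

lemma pow_card_mul_prod_discreteLaplaceMass_le (hp0 : 0 < p) (hp1 : p ≤ 1) (η : ι → ℤ)
    {ξ : ι → ℤ} (hξ : ∀ j, |ξ j| ≤ 1) :
    p ^ Fintype.card ι * ∏ j, discreteLaplaceMass p (η j) ≤
      ∏ j, discreteLaplaceMass p ((η + ξ) j) := by
  rw [← card_univ, ← prod_const, ← prod_mul_distrib]
  exact prod_le_prod (fun j _ => mul_nonneg hp0.le (discreteLaplaceMass_nonneg hp0 hp1 _))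
    fun j _ => mul_discreteLaplaceMass_le hp0 hp1 (η j) (hξ j)

lemma summable_prod_discreteLaplaceMass_mul_comp_add_right (hp0 : 0 < p) (hp1 : p ≤ 1)
    {g : (ι → ℤ) → ℝ} (hg : Summable fun η => (∏ j, discreteLaplaceMass p (η j)) * |g η|)
    {ξ : ι → ℤ} (hξ : ∀ j, |ξ j| ≤ 1) :
    Summable fun η => (∏ j, discreteLaplaceMass p (η j)) * g (η + ξ) := by
  have hshift := (hg.comp_injective (add_left_injective ξ)).mul_left (p ^ Fintype.card ι)⁻¹
  refine hshift.of_norm_bounded fun η => ?_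
  have hprod : 0 ≤ ∏ j, discreteLaplaceMass p (η j) :=
    prod_nonneg fun j _ => discreteLaplaceMass_nonneg hp0 hp1 _
  rw [Real.norm_eq_abs, abs_mul, abs_of_nonneg hprod, Function.comp_apply, ← mul_assoc]
  refine mul_le_mul_of_nonneg_right ?_ (abs_nonneg _)
  rw [le_inv_mul_iff₀ (pow_pos hp0 _)]
  exact pow_card_mul_prod_discreteLaplaceMass_le hp0 hp1 η hξ

variable [DecidableEq ι]

lemma abs_le_one_of_mem_piFinset {ξ : ι → ℤ}
    (hξ : ξ ∈ Fintype.piFinset fun _ : ι => ({-1, 0, 1} : Finset ℤ)) (j : ι) : |ξ j| ≤ 1 := by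
  have hξj := Fintype.mem_piFinset.1 hξ j
  simp only [mem_insert, mem_singleton] at hξj
  rcases hξj with h | h | h <;> simp [h]

theorem sum_piFinset_prod_debiasCoeff_mul_prod_discreteLaplaceMass (hp0 : 0 < p) (hp1 : p < 1)
    (η : ι → ℤ) :
    ∑ ξ ∈ Fintype.piFinset (fun _ : ι => ({-1, 0, 1} : Finset ℤ)),
        (∏ j, debiasCoeff p (ξ j)) * ∏ j, discreteLaplaceMass p (η j - ξ j) =
      if η = 0 then 1 else 0 := by
  calc _ = ∏ j, ∑ t ∈ ({-1, 0, 1} : Finset ℤ),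
          debiasCoeff p t * discreteLaplaceMass p (η j - t) := by
        rw [prod_univ_sum]
        simp_rw [prod_mul_distrib]
    _ = ∏ j, if η j = 0 then 1 else 0 := by
        simp_rw [sum_debiasCoeff_mul_discreteLaplaceMass hp0 hp1]
    _ = if η = 0 then 1 else 0 := by
        simp [prod_boole, funext_iff]

theorem tsum_prod_discreteLaplaceMass_mul_sum_debias (hp0 : 0 < p) (hp1 : p < 1)
    {g : (ι → ℤ) → ℝ} (hg : Summable fun η => (∏ j, discreteLaplaceMass p (η j)) * |g η|) :
    ∑' η : ι → ℤ, (∏ j, discreteLaplaceMass p (η j)) *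
        ∑ ξ ∈ Fintype.piFinset (fun _ : ι => ({-1, 0, 1} : Finset ℤ)),
          g (η + ξ) * ∏ j, debiasCoeff p (ξ j) = g 0 := by
  set C := Fintype.piFinset fun _ : ι => ({-1, 0, 1} : Finset ℤ)
  have hshift (ξ) (hξ : ξ ∈ C) :
      Summable fun η => (∏ j, discreteLaplaceMass p (η j)) * g (η + ξ) :=
    summable_prod_discreteLaplaceMass_mul_comp_add_right hp0 hp1.le hg
      (abs_le_one_of_mem_piFinset hξ)
  have hunshift (ξ) (hξ : ξ ∈ C) :
      Summable fun η => (∏ j, discreteLaplaceMass p (η j - ξ j)) * g η := by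
    simpa [Function.comp_def] using (Equiv.subRight ξ).summable_iff.2 (hshift ξ hξ)
  calc _ = ∑' η, ∑ ξ ∈ C, (∏ j, debiasCoeff p (ξ j)) *
          ((∏ j, discreteLaplaceMass p (η j)) * g (η + ξ)) :=
        tsum_congr fun η => by rw [mul_sum]; exact sum_congr rfl fun ξ _ => by ring
    _ = ∑ ξ ∈ C, ∑' η, (∏ j, debiasCoeff p (ξ j)) *
          ((∏ j, discreteLaplaceMass p (η j)) * g (η + ξ)) :=
        Summable.tsum_finsetSum fun ξ hξ => (hshift ξ hξ).mul_left _
    _ = ∑ ξ ∈ C, ∑' η, (∏ j, debiasCoeff p (ξ j)) *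
          ((∏ j, discreteLaplaceMass p (η j - ξ j)) * g η) := by
        refine sum_congr rfl fun ξ _ => Eq.symm ?_
        rw [← (Equiv.addRight ξ).tsum_eq]
        simp only [Equiv.coe_addRight, Pi.add_apply, add_sub_cancel_right]
    _ = ∑' η, ∑ ξ ∈ C, (∏ j, debiasCoeff p (ξ j)) *
          ((∏ j, discreteLaplaceMass p (η j - ξ j)) * g η) :=
        (Summable.tsum_finsetSum fun ξ hξ => (hunshift ξ hξ).mul_left _).symm
    _ = ∑' η, g η * if η = 0 then 1 else 0 := by
        refine tsum_congr fun η => ?_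
        rw [← sum_piFinset_prod_debiasCoeff_mul_prod_discreteLaplaceMass hp0 hp1 η, mul_sum]
        exact sum_congr rfl fun ξ _ => by ring
    _ = g 0 := by simp

end Multivariate

theorem discrete_laplace_unbiased_multivariate
    (p : ℝ) (hp0 : 0 < p) (hp1 : p < 1) (n : ℕ)
    (x : Fin n → ℤ) (f : (Fin n → ℤ) → ℝ)
    (α : ℤ → ℝ)
    (hα : ∀ ξ : ℤ, α ξ = if ξ = 0 then 1 + 2 * p / (1 - p) ^ 2 else -p / (1 - p) ^ 2)
    (hsum : Summable fun η : Fin n → ℤ =>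
      (∏ j, (1 - p) / (1 + p) * p ^ |η j|) * |f (x + η)|) :
    (∑' η : Fin n → ℤ, (∏ j, (1 - p) / (1 + p) * p ^ |η j|) *
        (∑ ξ ∈ Fintype.piFinset (fun _ : Fin n => ({-1, 0, 1} : Finset ℤ)),
          f (x + η + ξ) * ∏ j, α (ξ j))) = f x := by
  obtain rfl : α = debiasCoeff p := funext hα
  have key := tsum_prod_discreteLaplaceMass_mul_sum_debias hp0 hp1 (g := fun η => f (x + η)) hsum
  simp only [add_zero, ← add_assoc] at key
  exact key
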